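/- There exists a constant C > 0, independent of L ≥ 1, such that for every u ∈ H^2((-L,L)×(0,1); ℝ²) that is divergence free, satisfies u·n=0 on ∂Ω_L, and satisfies the Navier-slip boundary conditions μ ∂_y u¹(x,0) = −k₀ u¹(x,0), μ ∂_y u¹(x,1) = k₁ u¹(x,1), ∂_x u²(±L,y) = 0, one has ‖u‖_{L^4(Ω_L)}² ≤ C ‖u‖_{L^2(Ω_L)} ‖∇u‖_{L^2(Ω_L)}, where C depends only on μ, k₀, k₁. -/

import Mathlib

/-!
Write `u = (f, g)`. The divergence theorem on `[x, L] × [0, 1]` shows that `f (x, ·)` has zero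
mean, hence a zero, on every vertical segment, while `g (x, 0) = 0`. For a scalar `h` vanishing
somewhere on every vertical segment, the fundamental theorem of calculus applied to `h²` gives
`h (x, y)² ≤ A x := ∫ 2 |h| |∂_y h| dt` (start at the zero) and
`h (x, y)² ≤ B y := (2L)⁻¹ ∫ h² ds + ∫ 2 |h| |∂_x h| ds` (average over the starting point), so
`∫ h⁴ ≤ (∫ A) (∫ B)` and `∫ h² ≤ ∫ A`. Cauchy–Schwarz bounds each `∫ |h| |∂h|` by
`‖u‖_{L²} ‖∇u‖_{L²}`, and `(2L)⁻¹ ≤ 1/2` makes the constant independent of `L`.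
-/

open MeasureTheory Set

/-- The rectangle `Ω_L = (-L,L) × (0,1)` in `ℝ²`. -/
def rect (L : ℝ) : Set (ℝ × ℝ) := Set.Ioo (-L) L ×ˢ Set.Ioo (0 : ℝ) 1

/-- Horizontal partial derivative. -/
noncomputable def dx (g : ℝ × ℝ → ℝ) (q : ℝ × ℝ) : ℝ := fderiv ℝ g q (1, 0)

/-- Vertical partial derivative. -/
noncomputable def dy (g : ℝ × ℝ → ℝ) (q : ℝ × ℝ) : ℝ := fderiv ℝ g q (0, 1)

open scoped Interval

theorem abs_sub_le_integral_abs_deriv {φ φ' : ℝ → ℝ} (hφ : ∀ s, HasDerivAt φ (φ' s) s)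
    (hφ' : Continuous φ') {a b t y : ℝ} (ht : t ∈ Icc a b) (hy : y ∈ Icc a b) :
    |φ y - φ t| ≤ ∫ s in Ioo a b, |φ' s| := by
  have hsub : Ι t y ⊆ Ioc a b := by
    have hab := ht.1.trans ht.2
    rw [← uIoc_of_le hab]
    exact uIoc_subset_uIoc_of_uIcc_subset_uIcc
      (uIcc_subset_uIcc (by rwa [uIcc_of_le hab]) (by rwa [uIcc_of_le hab]))
  rw [← intervalIntegral.integral_eq_sub_of_hasDerivAt (fun s _ => hφ s)
    (hφ'.intervalIntegrable t y), ← integral_Ioc_eq_integral_Ioo]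
  exact intervalIntegral.norm_integral_le_integral_norm_uIoc.trans
    (setIntegral_mono_set (hφ'.abs.integrableOn_Icc.mono_set Ioc_subset_Icc_self)
      (.of_forall fun s => norm_nonneg (φ' s)) hsub.eventuallyLE)

theorem sq_le_sq_add_integral {φ φ' : ℝ → ℝ} (hφ : ∀ s, HasDerivAt φ (φ' s) s)
    (hφ' : Continuous φ') {a b t y : ℝ} (ht : t ∈ Icc a b) (hy : y ∈ Icc a b) :
    φ y ^ 2 ≤ φ t ^ 2 + ∫ s in Ioo a b, 2 * |φ s| * |φ' s| := by
  have hsq : ∀ s, HasDerivAt (fun r => φ r ^ 2) (2 * φ s * φ' s) s := fun s => by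
    simpa [mul_comm, mul_assoc, mul_left_comm] using (hφ s).fun_pow 2
  have h := abs_sub_le_integral_abs_deriv hsq
    ((continuous_const.mul (continuous_iff_continuousAt.2 fun s => (hφ s).continuousAt)).mul hφ')
    ht hy
  simp only [abs_mul, abs_two] at h
  linarith [le_abs_self (φ y ^ 2 - φ t ^ 2)]

theorem sq_le_inv_mul_integral_sq_add {φ φ' : ℝ → ℝ} (hφ : ∀ s, HasDerivAt φ (φ' s) s)
    (hφ' : Continuous φ') {a b y : ℝ} (hab : a < b) (hy : y ∈ Icc a b) :
    φ y ^ 2 ≤ (b - a)⁻¹ * (∫ s in Ioo a b, φ s ^ 2) +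
      ∫ s in Ioo a b, 2 * |φ s| * |φ' s| := by
  set R := ∫ s in Ioo a b, 2 * |φ s| * |φ' s|
  have hφc : Continuous φ := continuous_iff_continuousAt.2 fun s => (hφ s).continuousAt
  have h := setIntegral_mono_on (integrableOn_const (μ := volume) measure_Ioo_lt_top.ne)
    ((hφc.pow 2).integrableOn_Icc.mono_set Ioo_subset_Icc_self) measurableSet_Ioo
    fun t ht => show φ y ^ 2 - R ≤ φ t ^ 2 by
      linarith [sq_le_sq_add_integral hφ hφ' (Ioo_subset_Icc_self ht) hy]
  rw [setIntegral_const, Real.volume_real_Ioo_of_le hab.le, smul_eq_mul] at h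
  rw [← sub_le_iff_le_add, le_inv_mul_iff₀ (sub_pos.2 hab)]
  exact h

theorem exists_eq_zero_of_intervalIntegral_eq_zero {φ : ℝ → ℝ} {a b : ℝ} (hab : a < b)
    (hφ : ContinuousOn φ (Icc a b)) (h : ∫ t in a..b, φ t = 0) : ∃ t ∈ Icc a b, φ t = 0 := by
  have hμ : volume.restrict (Ioc a b) ≠ 0 := by simp [hab]
  have hint : Integrable φ (volume.restrict (Ioc a b)) :=
    (hφ.integrableOn_Icc).mono_set Ioc_subset_Icc_self
  have hnull : volume.restrict (Ioc a b) (Ioc a b)ᶜ = 0 := by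
    rw [Measure.restrict_apply' measurableSet_Ioc]; simp
  have havg : ⨍ t in Ioc a b, φ t = 0 := by
    rw [setAverage_eq, ← intervalIntegral.integral_of_le hab.le, h, smul_zero]
  obtain ⟨t₁, ht₁, h₁⟩ := exists_notMem_null_le_average hμ hint hnull
  obtain ⟨t₂, ht₂, h₂⟩ := exists_notMem_null_average_le hμ hint hnull
  rw [havg] at h₁ h₂
  have hsub : uIcc t₁ t₂ ⊆ Icc a b :=
    uIcc_subset_Icc (Ioc_subset_Icc_self (not_not.1 ht₁)) (Ioc_subset_Icc_self (not_not.1 ht₂))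
  obtain ⟨t, ht, hφt⟩ := intermediate_value_uIcc (hφ.mono hsub) (mem_uIcc.2 (.inl ⟨h₁, h₂⟩))
  exact ⟨t, hsub ht, hφt⟩

theorem integral_mul_le_integral_mul_integral {α β : Type*} [MeasurableSpace α]
    [MeasurableSpace β] {μ : Measure α} {ν : Measure β} [SFinite μ] [SFinite ν]
    {F G : α × β → ℝ} {A : α → ℝ} {B : β → ℝ} (hA : Integrable A μ) (hB : Integrable B ν)
    (hF : ∀ᵐ p ∂μ.prod ν, 0 ≤ F p ∧ F p ≤ A p.1) (hG : ∀ᵐ p ∂μ.prod ν, 0 ≤ G p ∧ G p ≤ B p.2) :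
    ∫ p, F p * G p ∂μ.prod ν ≤ (∫ x, A x ∂μ) * ∫ y, B y ∂ν := by
  rw [← integral_prod_mul]
  refine integral_mono_of_nonneg ?_ (hA.mul_prod hB) ?_
  · filter_upwards [hF, hG] with p hFp hGp using mul_nonneg hFp.1 hGp.1
  · filter_upwards [hF, hG] with p hFp hGp
    exact mul_le_mul hFp.2 hGp.2 hGp.1 (hFp.1.trans hFp.2)

theorem integral_mul_le_L2_mul_L2_of_nonneg {α : Type*} [MeasurableSpace α] {μ : Measure α}
    {F G : α → ℝ} (hF₀ : 0 ≤ᵐ[μ] F) (hG₀ : 0 ≤ᵐ[μ] G) (hF : MemLp F 2 μ) (hG : MemLp G 2 μ) :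
    ∫ a, F a * G a ∂μ ≤
      (∫ a, F a ^ 2 ∂μ) ^ ((1 : ℝ) / 2) * (∫ a, G a ^ 2 ∂μ) ^ ((1 : ℝ) / 2) := by
  have h := integral_mul_le_Lp_mul_Lq_of_nonneg Real.HolderConjugate.two_two hF₀ hG₀
    (by rwa [ENNReal.ofReal_ofNat]) (by rwa [ENNReal.ofReal_ofNat])
  simpa only [Real.rpow_two] using h

theorem norm_fderiv_fst_le {E F G : Type*} [NormedAddCommGroup E] [NormedSpace ℝ E]
    [NormedAddCommGroup F] [NormedSpace ℝ F] [NormedAddCommGroup G] [NormedSpace ℝ G]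
    {u : E → F × G} {p : E} (hu : DifferentiableAt ℝ u p) :
    ‖fderiv ℝ (fun q => (u q).1) p‖ ≤ ‖fderiv ℝ u p‖ := by
  rw [fderiv.fst hu]
  exact (ContinuousLinearMap.opNorm_comp_le _ _).trans
    (mul_le_of_le_one_left (norm_nonneg _) (ContinuousLinearMap.norm_fst_le _ _ _))

theorem norm_fderiv_snd_le {E F G : Type*} [NormedAddCommGroup E] [NormedSpace ℝ E]
    [NormedAddCommGroup F] [NormedSpace ℝ F] [NormedAddCommGroup G] [NormedSpace ℝ G]
    {u : E → F × G} {p : E} (hu : DifferentiableAt ℝ u p) :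
    ‖fderiv ℝ (fun q => (u q).2) p‖ ≤ ‖fderiv ℝ u p‖ := by
  rw [fderiv.snd hu]
  exact (ContinuousLinearMap.opNorm_comp_le _ _).trans
    (mul_le_of_le_one_left (norm_nonneg _) (ContinuousLinearMap.norm_snd_le _ _ _))

theorem Prod.norm_pow_four_le (z : ℝ × ℝ) : ‖z‖ ^ 4 ≤ z.1 ^ 4 + z.2 ^ 4 := by
  have h4 : Even 4 := by decide
  rw [Prod.norm_def, Real.norm_eq_abs, Real.norm_eq_abs]
  rcases max_choice |z.1| |z.2| with h | h <;> rw [h, h4.pow_abs] <;>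
    linarith [h4.pow_nonneg z.1, h4.pow_nonneg z.2]

section Rectangle

variable {h : ℝ × ℝ → ℝ} {a b c d : ℝ}

theorem hasDerivAt_dx (hh : Differentiable ℝ h) (s t : ℝ) :
    HasDerivAt (fun r => h (r, t)) (dx h (s, t)) s :=
  (hh (s, t)).hasFDerivAt.comp_hasDerivAt s ((hasDerivAt_id s).prodMk (hasDerivAt_const s t))

theorem hasDerivAt_dy (hh : Differentiable ℝ h) (s t : ℝ) :
    HasDerivAt (fun r => h (s, r)) (dy h (s, t)) t :=
  (hh (s, t)).hasFDerivAt.comp_hasDerivAt t ((hasDerivAt_const t s).prodMk (hasDerivAt_id t))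

theorem ContDiff.continuous_dx (hh : ContDiff ℝ 1 h) : Continuous (dx h) :=
  (hh.continuous_fderiv one_ne_zero).clm_apply continuous_const

theorem ContDiff.continuous_dy (hh : ContDiff ℝ 1 h) : Continuous (dy h) :=
  (hh.continuous_fderiv one_ne_zero).clm_apply continuous_const

theorem abs_dx_le_norm_fderiv (p : ℝ × ℝ) : |dx h p| ≤ ‖fderiv ℝ h p‖ := by
  simpa [dx] using (fderiv ℝ h p).le_opNorm (1, 0)

theorem abs_dy_le_norm_fderiv (p : ℝ × ℝ) : |dy h p| ≤ ‖fderiv ℝ h p‖ := by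
  simpa [dy] using (fderiv ℝ h p).le_opNorm (0, 1)

theorem Continuous.integrableOn_Ioo_prod_Ioo {F : ℝ × ℝ → ℝ} (hF : Continuous F) :
    IntegrableOn F (Ioo a b ×ˢ Ioo c d) :=
  (hF.continuousOn.integrableOn_compact (isCompact_Icc.prod isCompact_Icc)).mono_set
    (prod_mono Ioo_subset_Icc_self Ioo_subset_Icc_self)

theorem Continuous.integrable_restrict_Ioo_prod {F : ℝ × ℝ → ℝ} (hF : Continuous F) :
    Integrable F ((volume.restrict (Ioo a b)).prod (volume.restrict (Ioo c d))) := by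
  rw [Measure.prod_restrict]
  exact hF.integrableOn_Ioo_prod_Ioo

theorem Continuous.memLp_two_Ioo_prod_Ioo {F : ℝ × ℝ → ℝ} (hF : Continuous F) :
    MemLp F 2 (volume.restrict (Ioo a b ×ˢ Ioo c d)) :=
  (memLp_two_iff_integrable_sq hF.aestronglyMeasurable).2 (hF.pow 2).integrableOn_Ioo_prod_Ioo

theorem setIntegral_Ioo_prod_Ioo (F : ℝ × ℝ → ℝ) :
    ∫ p in Ioo a b ×ˢ Ioo c d, F p =
      ∫ p, F p ∂(volume.restrict (Ioo a b)).prod (volume.restrict (Ioo c d)) := by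
  rw [Measure.prod_restrict]; rfl

theorem ae_sq_le_integral_dy (hh : ContDiff ℝ 1 h)
    (hzero : ∀ x ∈ Ioo a b, ∃ t ∈ Icc c d, h (x, t) = 0) :
    ∀ᵐ p ∂(volume.restrict (Ioo a b)).prod (volume.restrict (Ioo c d)),
      0 ≤ h p ^ 2 ∧ h p ^ 2 ≤ ∫ t in Ioo c d, 2 * |h (p.1, t)| * |dy h (p.1, t)| := by
  rw [Measure.prod_restrict]
  filter_upwards [ae_restrict_mem (measurableSet_Ioo.prod measurableSet_Ioo)] with p hp
  obtain ⟨t, ht, h0⟩ := hzero p.1 hp.1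
  refine ⟨sq_nonneg _, ?_⟩
  simpa [h0] using sq_le_sq_add_integral (hasDerivAt_dy (hh.differentiable one_ne_zero) p.1)
    (hh.continuous_dy.comp (Continuous.prodMk_right p.1)) ht (Ioo_subset_Icc_self hp.2)

theorem integral_sq_le_of_exists_eq_zero (hh : ContDiff ℝ 1 h) (hcd : c ≤ d)
    (hzero : ∀ x ∈ Ioo a b, ∃ t ∈ Icc c d, h (x, t) = 0) :
    ∫ p in Ioo a b ×ˢ Ioo c d, h p ^ 2 ≤
      (∫ p in Ioo a b ×ˢ Ioo c d, 2 * |h p| * |dy h p|) * (d - c) := by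
  have hIA : Integrable (fun p => 2 * |h p| * |dy h p|)
      ((volume.restrict (Ioo a b)).prod (volume.restrict (Ioo c d))) :=
    ((continuous_const.mul hh.continuous.abs).mul hh.continuous_dy.abs).integrable_restrict_Ioo_prod
  have key := integral_mul_le_integral_mul_integral (G := fun _ => 1) hIA.integral_prod_left
    (integrableOn_const (μ := volume) (s := Ioo c d) measure_Ioo_lt_top.ne (C := (1 : ℝ)))
    (ae_sq_le_integral_dy hh hzero) (.of_forall fun _ => ⟨zero_le_one, le_rfl⟩)
  rw [setIntegral_Ioo_prod_Ioo, setIntegral_Ioo_prod_Ioo, integral_prod _ hIA]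
  simpa [Real.volume_real_Ioo_of_le hcd] using key

theorem integral_pow_four_le_of_exists_eq_zero (hh : ContDiff ℝ 1 h) (hab : a < b)
    (hzero : ∀ x ∈ Ioo a b, ∃ t ∈ Icc c d, h (x, t) = 0) :
    ∫ p in Ioo a b ×ˢ Ioo c d, h p ^ 4 ≤
      (∫ p in Ioo a b ×ˢ Ioo c d, 2 * |h p| * |dy h p|) *
        ((b - a)⁻¹ * (∫ p in Ioo a b ×ˢ Ioo c d, h p ^ 2) +
          ∫ p in Ioo a b ×ˢ Ioo c d, 2 * |h p| * |dx h p|) := by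
  have hc : Continuous h := hh.continuous
  set μ := (volume.restrict (Ioo a b)).prod (volume.restrict (Ioo c d))
  have hIA : Integrable (fun p => 2 * |h p| * |dy h p|) μ :=
    ((continuous_const.mul hc.abs).mul hh.continuous_dy.abs).integrable_restrict_Ioo_prod
  have hI2 : Integrable (fun p => h p ^ 2) μ := (hc.pow 2).integrable_restrict_Ioo_prod
  have hIB : Integrable (fun p => 2 * |h p| * |dx h p|) μ :=
    ((continuous_const.mul hc.abs).mul hh.continuous_dx.abs).integrable_restrict_Ioo_prod
  have hB : ∀ᵐ p ∂μ, 0 ≤ h p ^ 2 ∧ h p ^ 2 ≤ (b - a)⁻¹ * (∫ s in Ioo a b, h (s, p.2) ^ 2) +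
        ∫ s in Ioo a b, 2 * |h (s, p.2)| * |dx h (s, p.2)| := by
    simp only [μ, Measure.prod_restrict]
    filter_upwards [ae_restrict_mem (measurableSet_Ioo.prod measurableSet_Ioo)] with p hp
    exact ⟨sq_nonneg _, sq_le_inv_mul_integral_sq_add
      (hasDerivAt_dx (hh.differentiable one_ne_zero) · p.2)
      (hh.continuous_dx.comp (Continuous.prodMk_left p.2)) hab (Ioo_subset_Icc_self hp.1)⟩
  have key := integral_mul_le_integral_mul_integral hIA.integral_prod_left
    ((hI2.integral_prod_right.const_mul _).add hIB.integral_prod_right)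
    (ae_sq_le_integral_dy hh hzero) hB
  rw [setIntegral_Ioo_prod_Ioo, setIntegral_Ioo_prod_Ioo, setIntegral_Ioo_prod_Ioo,
    setIntegral_Ioo_prod_Ioo, integral_prod _ hIA, integral_prod_symm _ hI2,
    integral_prod_symm _ hIB, ← integral_const_mul, ← integral_add
      (hI2.integral_prod_right.const_mul _) hIB.integral_prod_right]
  simp only [Pi.add_apply] at key
  simpa only [← pow_add] using key

theorem integral_pow_four_le_of_abs_le {U V : ℝ × ℝ → ℝ} (hh : ContDiff ℝ 1 h) (hab : a < b)
    (hcd : c ≤ d) (hzero : ∀ x ∈ Ioo a b, ∃ t ∈ Icc c d, h (x, t) = 0)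
    (hUV : IntegrableOn (fun p => U p * V p) (Ioo a b ×ˢ Ioo c d))
    (hU : ∀ p ∈ Ioo a b ×ˢ Ioo c d, |h p| ≤ U p)
    (hV : ∀ p ∈ Ioo a b ×ˢ Ioo c d, ‖fderiv ℝ h p‖ ≤ V p) :
    ∫ p in Ioo a b ×ˢ Ioo c d, h p ^ 4 ≤
      4 * (1 + (d - c) / (b - a)) * (∫ p in Ioo a b ×ˢ Ioo c d, U p * V p) ^ 2 := by
  set K := ∫ p in Ioo a b ×ˢ Ioo c d, U p * V p
  have hpartial : ∀ D : ℝ × ℝ → ℝ, Continuous D → (∀ p, |D p| ≤ ‖fderiv ℝ h p‖) →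
      ∫ p in Ioo a b ×ˢ Ioo c d, 2 * |h p| * |D p| ≤ 2 * K := by
    intro D hD hDh
    rw [← integral_const_mul]
    refine setIntegral_mono_on
      ((continuous_const.mul hh.continuous.abs).mul hD.abs).integrableOn_Ioo_prod_Ioo
      (hUV.const_mul 2) (measurableSet_Ioo.prod measurableSet_Ioo) fun p hp => ?_
    rw [mul_assoc]
    gcongr
    · exact (abs_nonneg _).trans (hU p hp)
    · exact hU p hp
    · exact (hDh p).trans (hV p hp)
  have hY := hpartial _ hh.continuous_dy abs_dy_le_norm_fderiv
  have hX := hpartial _ hh.continuous_dx abs_dx_le_norm_fderiv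
  have h2 := (integral_sq_le_of_exists_eq_zero hh hcd hzero).trans
    (mul_le_mul_of_nonneg_right hY (sub_nonneg.2 hcd))
  have hK : 0 ≤ 2 * K := (integral_nonneg fun p => by positivity).trans hY
  have hba : 0 < b - a := sub_pos.2 hab
  calc ∫ p in Ioo a b ×ˢ Ioo c d, h p ^ 4
      ≤ _ := integral_pow_four_le_of_exists_eq_zero hh hab hzero
    _ ≤ 2 * K * ((b - a)⁻¹ * (2 * K * (d - c)) + 2 * K) := by gcongr
    _ = 4 * (1 + (d - c) / (b - a)) * K ^ 2 := by field_simp; ring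

theorem integral_norm_pow_four_le {u : ℝ × ℝ → ℝ × ℝ} (hu : ContDiff ℝ 1 u) (hab : a < b)
    (hcd : c ≤ d) (hu₁ : ∀ x ∈ Ioo a b, ∃ t ∈ Icc c d, (u (x, t)).1 = 0)
    (hu₂ : ∀ x ∈ Ioo a b, ∃ t ∈ Icc c d, (u (x, t)).2 = 0) :
    ∫ p in Ioo a b ×ˢ Ioo c d, ‖u p‖ ^ 4 ≤
      8 * (1 + (d - c) / (b - a)) * (∫ p in Ioo a b ×ˢ Ioo c d, ‖u p‖ * ‖fderiv ℝ u p‖) ^ 2 := by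
  have hud : Differentiable ℝ u := hu.differentiable one_ne_zero
  have hf : ContDiff ℝ 1 fun q => (u q).1 := contDiff_fst.comp hu
  have hg : ContDiff ℝ 1 fun q => (u q).2 := contDiff_snd.comp hu
  have hUV : IntegrableOn (fun p => ‖u p‖ * ‖fderiv ℝ u p‖) (Ioo a b ×ˢ Ioo c d) :=
    (hu.continuous.norm.mul (hu.continuous_fderiv one_ne_zero).norm).integrableOn_Ioo_prod_Ioo
  have hf4 := integral_pow_four_le_of_abs_le hf hab hcd hu₁ hUV
    (fun p _ => norm_fst_le (u p)) (fun p _ => norm_fderiv_fst_le (hud p))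
  have hg4 := integral_pow_four_le_of_abs_le hg hab hcd hu₂ hUV
    (fun p _ => norm_snd_le (u p)) (fun p _ => norm_fderiv_snd_le (hud p))
  calc ∫ p in Ioo a b ×ˢ Ioo c d, ‖u p‖ ^ 4
      ≤ ∫ p in Ioo a b ×ˢ Ioo c d, ((u p).1 ^ 4 + (u p).2 ^ 4) :=
        setIntegral_mono_on (hu.continuous.norm.pow 4).integrableOn_Ioo_prod_Ioo
          ((hf.continuous.pow 4).add (hg.continuous.pow 4)).integrableOn_Ioo_prod_Ioo
          (measurableSet_Ioo.prod measurableSet_Ioo) fun p _ => (u p).norm_pow_four_le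
    _ = (∫ p in Ioo a b ×ˢ Ioo c d, (u p).1 ^ 4) + ∫ p in Ioo a b ×ˢ Ioo c d, (u p).2 ^ 4 :=
        integral_add (hf.continuous.pow 4).integrableOn_Ioo_prod_Ioo
          (hg.continuous.pow 4).integrableOn_Ioo_prod_Ioo
    _ ≤ _ := by linarith

end Rectangle

theorem intervalIntegral_section_eq_zero_of_div_eq_zero {f g : ℝ × ℝ → ℝ}
    (hf : Differentiable ℝ f) (hg : Differentiable ℝ g) (hdiv : ∀ p, dx f p + dy g p = 0) {x b c d : ℝ}
    (hfb : ∀ t ∈ [[c, d]], f (b, t) = 0) (hgc : ∀ s ∈ [[x, b]], g (s, c) = 0)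
    (hgd : ∀ s ∈ [[x, b]], g (s, d) = 0) :
    ∫ t in c..d, f (x, t) = 0 := by
  have hdiv' : ∀ p, fderiv ℝ f p (1, 0) + fderiv ℝ g p (0, 1) = 0 := hdiv
  have h := integral2_divergence_prod_of_hasFDerivAt f g (fderiv ℝ f) (fderiv ℝ g) x c b d
    hf.continuous.continuousOn hg.continuous.continuousOn (fun p _ => (hf p).hasFDerivAt)
    (fun p _ => (hg p).hasFDerivAt) (by simp only [hdiv']; exact integrableOn_zero)
  rw [intervalIntegral.integral_congr (g := 0) hfb, intervalIntegral.integral_congr (g := 0) hgc,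
    intervalIntegral.integral_congr (g := 0) hgd] at h
  simpa [hdiv'] using h

theorem exists_fst_eq_zero_of_div_eq_zero {u : ℝ × ℝ → ℝ × ℝ} (hu : ContDiff ℝ 1 u)
    (hdiv : ∀ p, dx (fun q => (u q).1) p + dy (fun q => (u q).2) p = 0) {a b c d : ℝ}
    (hcd : c < d) (hb : ∀ t ∈ Icc c d, (u (b, t)).1 = 0)
    (hu₂ : ∀ s ∈ Icc a b, (u (s, c)).2 = 0 ∧ (u (s, d)).2 = 0) :
    ∀ x ∈ Ioo a b, ∃ t ∈ Icc c d, (u (x, t)).1 = 0 := by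
  intro x hx
  have hsub : uIcc x b ⊆ Icc a b :=
    uIcc_subset_Icc (Ioo_subset_Icc_self hx) (right_mem_Icc.2 (hx.1.trans hx.2).le)
  have hud := hu.differentiable one_ne_zero
  refine exists_eq_zero_of_intervalIntegral_eq_zero hcd
    ((contDiff_fst.comp hu).continuous.comp (Continuous.prodMk_right x)).continuousOn ?_
  exact intervalIntegral_section_eq_zero_of_div_eq_zero (differentiable_fst.comp hud)
    (differentiable_snd.comp hud) hdiv (fun t ht => hb t (by rwa [uIcc_of_le hcd.le] at ht))
    (fun s hs => (hu₂ s (hsub hs)).1) (fun s hs => (hu₂ s (hsub hs)).2)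

theorem uniform_L4_navier_slip_general (μ k₀ k₁ : ℝ) :
    ∃ C > 0, ∀ (L : ℝ), 1 ≤ L → ∀ (u : ℝ × ℝ → ℝ × ℝ),
      ContDiff ℝ 2 u →
      (∀ p : ℝ × ℝ, dx (fun q => (u q).1) p + dy (fun q => (u q).2) p = 0) →
      (∀ y ∈ Set.Icc (0 : ℝ) 1, (u (-L, y)).1 = 0 ∧ (u (L, y)).1 = 0) →
      (∀ x ∈ Set.Icc (-L) L, (u (x, 0)).2 = 0 ∧ (u (x, 1)).2 = 0) →
      (∀ x ∈ Set.Icc (-L) L,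
        μ * dy (fun q => (u q).1) (x, 0) = -k₀ * (u (x, 0)).1 ∧
        μ * dy (fun q => (u q).1) (x, 1) = k₁ * (u (x, 1)).1) →
      (∀ y ∈ Set.Icc (0 : ℝ) 1,
        dx (fun q => (u q).2) (-L, y) = 0 ∧ dx (fun q => (u q).2) (L, y) = 0) →
      (∫ p in rect L, ‖u p‖ ^ 4) ^ ((1 : ℝ) / 2) ≤
        C * (∫ p in rect L, ‖u p‖ ^ 2) ^ ((1 : ℝ) / 2) *
          (∫ p in rect L, ‖fderiv ℝ u p‖ ^ 2) ^ ((1 : ℝ) / 2) := by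
  refine ⟨4, by norm_num, fun L hL u hu hdiv hu₁ hu₂ _ _ => ?_⟩
  have hu1 : ContDiff ℝ 1 u := hu.of_le one_le_two
  have hf0 := exists_fst_eq_zero_of_div_eq_zero hu1 hdiv one_pos (fun t ht => (hu₁ t ht).2) hu₂
  have hg0 : ∀ x ∈ Ioo (-L) L, ∃ t ∈ Icc (0 : ℝ) 1, (u (x, t)).2 = 0 := fun x hx =>
    ⟨0, left_mem_Icc.2 zero_le_one, (hu₂ x (Ioo_subset_Icc_self hx)).1⟩
  set K := ∫ p in rect L, ‖u p‖ * ‖fderiv ℝ u p‖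
  have hu4 : ∫ p in rect L, ‖u p‖ ^ 4 ≤ 8 * (1 + (1 - 0) / (L - -L)) * K ^ 2 :=
    integral_norm_pow_four_le hu1 (by linarith) zero_le_one hf0 hg0
  have hr : (1 - 0) / (L - -L) ≤ 1 := by rw [div_le_one (by linarith)]; linarith
  have hCS : K ≤ (∫ p in rect L, ‖u p‖ ^ 2) ^ ((1 : ℝ) / 2) *
      (∫ p in rect L, ‖fderiv ℝ u p‖ ^ 2) ^ ((1 : ℝ) / 2) :=
    integral_mul_le_L2_mul_L2_of_nonneg (.of_forall fun _ => norm_nonneg _)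
      (.of_forall fun _ => norm_nonneg _) hu1.continuous.norm.memLp_two_Ioo_prod_Ioo
      (hu1.continuous_fderiv one_ne_zero).norm.memLp_two_Ioo_prod_Ioo
  have hK : 0 ≤ K := integral_nonneg fun p => by positivity
  calc (∫ p in rect L, ‖u p‖ ^ 4) ^ ((1 : ℝ) / 2)
      ≤ ((4 * K) ^ 2) ^ ((1 : ℝ) / 2) := by gcongr; nlinarith
    _ = 4 * K := by rw [← Real.sqrt_eq_rpow, Real.sqrt_sq (by positivity)]
    _ ≤ _ := by rw [mul_assoc]; gcongr

/-- Uniform-in-`L` Ladyzhenskaya inequality for vector fields satisfying Navier-slip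
boundary conditions on `Ω_L = (-L,L)×(0,1)`: `‖u‖²_{L⁴} ≤ C ‖u‖_{L²} ‖∇u‖_{L²}` with `C`
depending only on `μ, k₀, k₁`. -/
theorem uniform_L4_navier_slip (μ k₀ k₁ : ℝ) (hμ : 0 < μ) :
    ∃ C > 0, ∀ (L : ℝ), 1 ≤ L → ∀ (u : ℝ × ℝ → ℝ × ℝ),
      ContDiff ℝ 2 u →
      (∀ p : ℝ × ℝ, dx (fun q => (u q).1) p + dy (fun q => (u q).2) p = 0) →
      (∀ y ∈ Set.Icc (0 : ℝ) 1, (u (-L, y)).1 = 0 ∧ (u (L, y)).1 = 0) →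
      (∀ x ∈ Set.Icc (-L) L, (u (x, 0)).2 = 0 ∧ (u (x, 1)).2 = 0) →
      (∀ x ∈ Set.Icc (-L) L,
        μ * dy (fun q => (u q).1) (x, 0) = -k₀ * (u (x, 0)).1 ∧
        μ * dy (fun q => (u q).1) (x, 1) = k₁ * (u (x, 1)).1) →
      (∀ y ∈ Set.Icc (0 : ℝ) 1,
        dx (fun q => (u q).2) (-L, y) = 0 ∧ dx (fun q => (u q).2) (L, y) = 0) →
      (∫ p in rect L, ‖u p‖ ^ 4) ^ ((1 : ℝ) / 2) ≤
        C * (∫ p in rect L, ‖u p‖ ^ 2) ^ ((1 : ℝ) / 2) *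
          (∫ p in rect L, ‖fderiv ℝ u p‖ ^ 2) ^ ((1 : ℝ) / 2) :=
  uniform_L4_navier_slip_general μ k₀ k₁
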